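/- If R ∈ A⊗A⊗A satisfies R¹⊗aR²⊗R³ = R¹⊗R²⊗R³a for all a ∈ A, R¹R²⊗R³ = 1⊗1 and R²⊗R³R¹ = 1⊗1, then the additional normalizing condition R¹⊗R²R³ = 1⊗1 holds. -/

import Mathlib

open TensorProduct

/-!
Contracting the first two legs of `R¹ ⊗ aR² ⊗ R³ = R¹ ⊗ R² ⊗ R³a` and using `R¹R² ⊗ R³ = 1 ⊗ 1`
gives `R¹aR² ⊗ R³ = 1 ⊗ a`, hence `R¹aR²R³ = a` and `R³ ⊗ R¹aR² = a ⊗ 1`. Taking `a = R¹` in the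
last identity and multiplying its second leg by `R²R³` on the right,
`R¹ ⊗ R²R³ = r³ ⊗ r¹R¹r²R²R³ = r³ ⊗ r¹r² = 1 ⊗ 1`.
-/

section RMatrix

variable {k A ι : Type*} [CommSemiring k] [Semiring A] [Algebra k A]
  {s : Finset ι} {x y z : ι → A}

theorem sum_mul_mul_tmul_eq_one_tmul
    (hcen : ∀ a : A,
      ∑ i ∈ s, x i ⊗ₜ[k] (a * y i) ⊗ₜ[k] z i = ∑ i ∈ s, x i ⊗ₜ[k] y i ⊗ₜ[k] (z i * a))
    (hnorm : ∑ i ∈ s, (x i * y i) ⊗ₜ[k] z i = (1 : A) ⊗ₜ[k] (1 : A)) (a : A) :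
    ∑ i ∈ s, (x i * a * y i) ⊗ₜ[k] z i = (1 : A) ⊗ₜ[k] a := by
  calc ∑ i ∈ s, (x i * a * y i) ⊗ₜ[k] z i
      = ∑ i ∈ s, (x i * y i) ⊗ₜ[k] (z i * a) := by
        simpa [map_sum, mul_assoc] using
          congrArg (TensorProduct.map (LinearMap.mul' k A) LinearMap.id) (hcen a)
    _ = (∑ i ∈ s, (x i * y i) ⊗ₜ[k] z i) * ((1 : A) ⊗ₜ[k] a) := by
        simp only [Finset.sum_mul, Algebra.TensorProduct.tmul_mul_tmul, mul_one]
    _ = (1 : A) ⊗ₜ[k] a := by rw [hnorm, Algebra.TensorProduct.tmul_mul_tmul, one_mul, one_mul]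

theorem sum_mul_mul_mul_eq_self
    (hcen : ∀ a : A,
      ∑ i ∈ s, x i ⊗ₜ[k] (a * y i) ⊗ₜ[k] z i = ∑ i ∈ s, x i ⊗ₜ[k] y i ⊗ₜ[k] (z i * a))
    (hnorm : ∑ i ∈ s, (x i * y i) ⊗ₜ[k] z i = (1 : A) ⊗ₜ[k] (1 : A)) (a : A) :
    ∑ i ∈ s, x i * a * y i * z i = a := by
  simpa [map_sum] using
    congrArg (LinearMap.mul' k A) (sum_mul_mul_tmul_eq_one_tmul hcen hnorm a)

theorem sum_tmul_mul_mul_eq_tmul_one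
    (hcen : ∀ a : A,
      ∑ i ∈ s, x i ⊗ₜ[k] (a * y i) ⊗ₜ[k] z i = ∑ i ∈ s, x i ⊗ₜ[k] y i ⊗ₜ[k] (z i * a))
    (hnorm : ∑ i ∈ s, (x i * y i) ⊗ₜ[k] z i = (1 : A) ⊗ₜ[k] (1 : A)) (a : A) :
    ∑ i ∈ s, z i ⊗ₜ[k] (x i * a * y i) = a ⊗ₜ[k] (1 : A) := by
  simpa [map_sum] using
    congrArg (TensorProduct.comm k A A) (sum_mul_mul_tmul_eq_one_tmul hcen hnorm a)

end RMatrix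

theorem additional_normalizing_condition_of_R_matrix_general
    (k A : Type*) [CommRing k] [Ring A] [Algebra k A]
    (ι : Type*) (s : Finset ι) (x y z : ι → A)
    (hcen : ∀ a : A,
      ∑ i ∈ s, x i ⊗ₜ[k] (a * y i) ⊗ₜ[k] z i
        = ∑ i ∈ s, x i ⊗ₜ[k] y i ⊗ₜ[k] (z i * a))
    (hnorm1 : ∑ i ∈ s, (x i * y i) ⊗ₜ[k] z i = (1 : A) ⊗ₜ[k] (1 : A)) :
    ∑ i ∈ s, x i ⊗ₜ[k] (y i * z i) = (1 : A) ⊗ₜ[k] (1 : A) := by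
  have hflip : ∑ j ∈ s, z j ⊗ₜ[k] (x j * y j) = (1 : A) ⊗ₜ[k] (1 : A) := by
    simpa [map_sum] using congrArg (TensorProduct.comm k A A) hnorm1
  calc ∑ i ∈ s, x i ⊗ₜ[k] (y i * z i)
      = ∑ i ∈ s, (∑ j ∈ s, z j ⊗ₜ[k] (x j * x i * y j)) * ((1 : A) ⊗ₜ[k] (y i * z i)) := by
        simp only [sum_tmul_mul_mul_eq_tmul_one hcen hnorm1, Algebra.TensorProduct.tmul_mul_tmul,
          one_mul, mul_one]
    _ = ∑ j ∈ s, z j ⊗ₜ[k] (x j * ∑ i ∈ s, x i * y j * y i * z i) := by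
        simp only [Finset.sum_mul, Algebra.TensorProduct.tmul_mul_tmul, mul_one, Finset.mul_sum,
          tmul_sum, mul_assoc]
        exact Finset.sum_comm
    _ = (1 : A) ⊗ₜ[k] (1 : A) := by
        simp only [sum_mul_mul_mul_eq_self hcen hnorm1, hflip]

/-- If `R ∈ A ⊗ A ⊗ A` satisfies `R¹ ⊗ aR² ⊗ R³ = R¹ ⊗ R² ⊗ R³a` for all
`a ∈ A`, `R¹R² ⊗ R³ = 1 ⊗ 1` and `R² ⊗ R³R¹ = 1 ⊗ 1`, then the additional normalizing
condition `R¹ ⊗ R²R³ = 1 ⊗ 1` holds. -/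
theorem additional_normalizing_condition_of_R_matrix
    (k A : Type*) [CommRing k] [Ring A] [Algebra k A]
    (ι : Type*) (s : Finset ι) (x y z : ι → A)
    (hcen : ∀ a : A,
      ∑ i ∈ s, x i ⊗ₜ[k] (a * y i) ⊗ₜ[k] z i
        = ∑ i ∈ s, x i ⊗ₜ[k] y i ⊗ₜ[k] (z i * a))
    (hnorm1 : ∑ i ∈ s, (x i * y i) ⊗ₜ[k] z i = (1 : A) ⊗ₜ[k] (1 : A))
    (hnorm2 : ∑ i ∈ s, y i ⊗ₜ[k] (z i * x i) = (1 : A) ⊗ₜ[k] (1 : A)) :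
    ∑ i ∈ s, x i ⊗ₜ[k] (y i * z i) = (1 : A) ⊗ₜ[k] (1 : A) :=
  additional_normalizing_condition_of_R_matrix_general k A ι s x y z hcen hnorm1
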